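/- arXiv:2311.02856 — 2 statements merged into one kernel-verified Lean document; each statement's English description precedes it below -/
import Mathlib

section
/- Let (X, A) be a t-(v,k,λ) design with no repeated blocks and let a_s ∈ {0,...,λ_s^t} for s ∈ [t−1] with Σ_s a_s·C(t,s) > λ_1. Then for every t-subset τ ⊆ X there exists a set ζ of Σ_s a_s·C(t,s) blocks of A such that the subarray of the incidence array P (rows = blocks, columns = points, entry * iff the point is in the block) restricted to rows ζ and columns τ has its stars in exactly the same positions as the stacked PDA B built from the a_s (rows indexed by (Y,i), Y ⊆ [t] of size s, i ∈ [a_s]; star at column j iff j ∈ Y under the natural bijection τ → [t]). -/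
/-- The row-index set of the stacked array B: triples (s, i, Y) with
s ∈ [t−1], i ∈ [a_s], and Y an s-subset of [t]. -/
def stackedRows (t : ℕ) (a : ℕ → ℕ) : Finset (ℕ × ℕ × Finset (Fin t)) :=
  (Finset.Icc 1 (t - 1)).biUnion (fun s =>
    (Finset.Icc 1 (a s)).biUnion (fun i =>
      (Finset.univ.filter (fun Y : Finset (Fin t) => Y.card = s)).image
        (fun Y => (s, i, Y))))

/-!
Fix a `t`-subset `τ` of the points. Double counting the pairs `(T, b)` with `S ⊆ T ⊆ b`,
`#T = t`, shows that a `t`-design is also an `s`-design for every `s ≤ t`. Partitioning the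
blocks containing `S ⊆ τ` according to their trace on `τ` and using Vandermonde's identity,
downward induction on `#S` then shows that exactly `λ_s^t` blocks have trace `S` on `τ`, where
`s = #S`. Since `a_s ≤ λ_s^t` and blocks with different traces are distinct, the `a_s` rows
`(s, i, Y)` with a fixed `Y` can be sent injectively to blocks whose trace on `τ` is the
preimage of `Y`.
-/

open Finset Function

theorem sum_powerset_choose_sub_card {β : Type*} (D : Finset β) (n : ℕ) {m : ℕ} (hm : #D ≤ m) :
    ∑ W ∈ D.powerset, n.choose (m - #W) = (#D + n).choose m := by
  rw [sum_powerset_apply_card (fun j => n.choose (m - j)), Nat.add_choose_eq,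
    Nat.sum_antidiagonal_eq_sum_range_succ_mk]
  refine sum_subset (range_subset_range.2 (by omega)) fun i _ hi => ?_
  rw [Nat.choose_eq_zero_of_lt (by simpa using hi), zero_smul]

theorem sum_Icc_choose_sub_card {α : Type*} [DecidableEq α] {S τ : Finset α} (hSτ : S ⊆ τ)
    (n : ℕ) {m : ℕ} (hm : #τ ≤ m) :
    ∑ U ∈ Icc S τ, n.choose (m - #U) = (#τ - #S + n).choose (m - #S) := by
  have hdisj : ∀ W ∈ (τ \ S).powerset, Disjoint S W := fun W hW =>
    disjoint_of_subset_right (mem_powerset.1 hW) disjoint_sdiff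
  rw [Icc_eq_image_powerset hSτ, sum_image fun W hW W' hW' h => by
      simpa [union_sdiff_cancel_left (hdisj W hW), union_sdiff_cancel_left (hdisj W' hW')]
        using congr_arg (· \ S) h,
    ← card_sdiff_of_subset hSτ, ← sum_powerset_choose_sub_card _ _ (by
      rw [card_sdiff_of_subset hSτ]; have := card_le_card hSτ; omega)]
  refine sum_congr rfl fun W hW => ?_
  rw [card_union_of_disjoint (hdisj W hW), Nat.sub_add_eq]

theorem card_filter_subset_eq_sum_card_filter_inter_eq {α : Type*} [DecidableEq α]
    (A : Finset (Finset α)) {S τ : Finset α} (hSτ : S ⊆ τ) :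
    #{b ∈ A | S ⊆ b} = ∑ U ∈ Icc S τ, #{b ∈ A | b ∩ τ = U} := by
  rw [card_eq_sum_card_fiberwise (f := (· ∩ τ)) fun b hb =>
    mem_Icc.2 ⟨subset_inter (mem_filter.1 hb).2 hSτ, inter_subset_right⟩]
  refine sum_congr rfl fun U hU => ?_
  rw [filter_filter]
  refine congr_arg card (filter_congr fun b _ => ?_)
  constructor
  · exact And.right
  · rintro rfl
    exact ⟨(mem_Icc.1 hU).1.trans inter_subset_left, rfl⟩

section Design

variable {α : Type*} [Fintype α] [DecidableEq α] {A : Finset (Finset α)} {k t lam : ℕ}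

theorem card_filter_subset_mul_choose (hblocks : ∀ b ∈ A, #b = k)
    (hdes : ∀ T : Finset α, #T = t → #{b ∈ A | T ⊆ b} = lam) {S : Finset α} (hS : #S ≤ t) :
    #{b ∈ A | S ⊆ b} * (k - #S).choose (t - #S)
      = lam * (Fintype.card α - #S).choose (t - #S) := by
  have hdouble := card_mul_eq_card_mul (fun b T => T ⊆ b)
    (s := {b ∈ A | S ⊆ b}) (t := {T ∈ univ.powersetCard t | S ⊆ T})
    (m := (k - #S).choose (t - #S)) (n := lam)
    (fun b hb => by
      obtain ⟨hbA, hSb⟩ := mem_filter.1 hb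
      rw [bipartiteAbove, filter_filter, ← hblocks b hbA,
        ← card_filter_powersetCard_subset S b t hSb hS]
      congr 1
      ext T
      simp only [mem_filter, mem_powersetCard, subset_univ, true_and]
      tauto)
    (fun T hT => by
      obtain ⟨hTt, hST⟩ := mem_filter.1 hT
      rw [bipartiteBelow, filter_filter, ← hdes T (mem_powersetCard.1 hTt).2]
      exact congr_arg card (filter_congr fun b _ => ⟨And.right, fun hTb => ⟨hST.trans hTb, hTb⟩⟩))
  rw [hdouble, card_filter_powersetCard_subset S univ t (subset_univ S) hS, card_univ, mul_comm]

theorem card_filter_inter_eq_mul_choose (hblocks : ∀ b ∈ A, #b = k)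
    (hdes : ∀ T : Finset α, #T = t → #{b ∈ A | T ⊆ b} = lam) (hkt : t ≤ k)
    {τ : Finset α} (hτ : #τ = t) {S : Finset α} (hSτ : S ⊆ τ) :
    #{b ∈ A | b ∩ τ = S} * (Fintype.card α - t).choose (k - t)
      = lam * (Fintype.card α - t).choose (k - #S) := by
  set v := Fintype.card α
  set c := (v - t).choose (k - t)
  have htv : t ≤ v := hτ ▸ card_le_univ τ
  suffices ∀ S : Finset α, #S ≤ t → S ⊆ τ →
      #{b ∈ A | b ∩ τ = S} * c = lam * (v - t).choose (k - #S) from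
    this S (hτ ▸ card_le_card hSτ) hSτ
  refine strongDownwardInduction fun S ih hSt hSτ => ?_
  have hSI : S ∈ Icc S τ := mem_Icc.2 ⟨le_rfl, hSτ⟩
  have hm : 0 < (k - #S).choose (t - #S) := Nat.choose_pos (by omega)
  have hsum : ∑ U ∈ Icc S τ, #{b ∈ A | b ∩ τ = U} * c
      = lam * ∑ U ∈ Icc S τ, (v - t).choose (k - #U) := by
    refine Nat.eq_of_mul_eq_mul_right hm ?_
    calc (∑ U ∈ Icc S τ, #{b ∈ A | b ∩ τ = U} * c) * (k - #S).choose (t - #S)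
        = #{b ∈ A | S ⊆ b} * (k - #S).choose (t - #S) * c := by
          rw [card_filter_subset_eq_sum_card_filter_inter_eq A hSτ, ← sum_mul]; ring
      _ = lam * ((v - #S).choose (k - #S) * (k - #S).choose (t - #S)) := by
          rw [card_filter_subset_mul_choose hblocks hdes hSt, Nat.choose_mul (by omega),
            show v - #S - (t - #S) = v - t by omega, show k - #S - (t - #S) = k - t by omega]
          ring
      _ = (lam * ∑ U ∈ Icc S τ, (v - t).choose (k - #U)) * (k - #S).choose (t - #S) := by
          rw [sum_Icc_choose_sub_card hSτ _ (hτ ▸ hkt), hτ,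
            show t - #S + (v - t) = v - #S by omega, mul_assoc]
  have hlarger : ∀ U ∈ (Icc S τ).erase S,
      #{b ∈ A | b ∩ τ = U} * c = lam * (v - t).choose (k - #U) := fun U hU => by
    obtain ⟨hUS, hU⟩ := mem_erase.1 hU
    obtain ⟨hSU, hUτ⟩ := mem_Icc.1 hU
    exact ih (hτ ▸ card_le_card hUτ) (ssubset_of_subset_of_ne hSU (Ne.symm hUS)) hUτ
  rw [← add_sum_erase _ _ hSI, ← add_sum_erase _ _ hSI, mul_add, sum_congr rfl hlarger,
    ← mul_sum] at hsum
  exact Nat.add_right_cancel hsum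

theorem le_card_filter_inter_eq (hblocks : ∀ b ∈ A, #b = k)
    (hdes : ∀ T : Finset α, #T = t → #{b ∈ A | T ⊆ b} = lam) (hkt : t ≤ k)
    (hk : k ≤ Fintype.card α) {τ : Finset α} (hτ : #τ = t) {S : Finset α} (hSτ : S ⊆ τ)
    {n : ℕ} (hn : (n : ℚ) ≤ lam * (Fintype.card α - t).choose (k - #S)
      / (Fintype.card α - t).choose (k - t)) :
    n ≤ #{b ∈ A | b ∩ τ = S} := by
  have hc : 0 < (Fintype.card α - t).choose (k - t) := Nat.choose_pos (by omega)
  have hle : n * (Fintype.card α - t).choose (k - t)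
      ≤ lam * (Fintype.card α - t).choose (k - #S) := by
    exact_mod_cast (le_div_iff₀ (by exact_mod_cast hc)).1 hn
  rw [← card_filter_inter_eq_mul_choose hblocks hdes hkt hτ hSτ] at hle
  exact Nat.le_of_mul_le_mul_right hle hc

end Design

section Trace

variable {α β : Type*} [Fintype β] {τ : Finset α} {f : α → β}

theorem surjOn_univ_of_injOn (hf : Set.InjOn f τ) (hτ : #τ = Fintype.card β) :
    Set.SurjOn f τ Set.univ := by
  simpa using surjOn_of_injOn_of_card_le f (t := univ) (fun _ _ => mem_univ _) hf (by simp [hτ])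

variable [DecidableEq β]

theorem card_filter_apply_mem (hf : Set.InjOn f τ) (hτ : #τ = Fintype.card β) (Y : Finset β) :
    #{x ∈ τ | f x ∈ Y} = #Y := by
  refine card_nbij f (fun x hx => (mem_filter.1 hx).2) (hf.mono fun x hx => (mem_filter.1 hx).1)
    fun y hy => ?_
  obtain ⟨x, hxτ, rfl⟩ := surjOn_univ_of_injOn hf hτ (Set.mem_univ y)
  exact ⟨x, mem_filter.2 ⟨hxτ, hy⟩, rfl⟩

theorem filter_apply_mem_injective (hf : Set.InjOn f τ) (hτ : #τ = Fintype.card β) :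
    Injective fun Y : Finset β => {x ∈ τ | f x ∈ Y} := fun Y Y' h => by
  ext y
  obtain ⟨x, hxτ, rfl⟩ := surjOn_univ_of_injOn hf hτ (Set.mem_univ y)
  have hx := congr_arg (x ∈ ·) h
  simp only [mem_filter, eq_iff_iff] at hx
  exact and_congr_right_iff.1 hx hxτ

end Trace

theorem mem_stackedRows {t : ℕ} {a : ℕ → ℕ} {r : ℕ × ℕ × Finset (Fin t)} :
    r ∈ stackedRows t a ↔ r.1 ∈ Icc 1 (t - 1) ∧ r.2.1 ∈ Icc 1 (a r.1) ∧ #r.2.2 = r.1 := by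
  obtain ⟨s, i, Y⟩ := r
  simp only [stackedRows, mem_biUnion, mem_image, mem_filter, mem_univ, true_and, Prod.mk.injEq]
  constructor
  · rintro ⟨s, hs, i, hi, Y, hY, rfl, rfl, rfl⟩
    exact ⟨hs, hi, hY⟩
  · rintro ⟨hs, hi, hY⟩
    exact ⟨s, hs, i, hi, Y, hY, rfl, rfl, rfl⟩

theorem exists_injOn_stackedRows {β : Type*} [Nonempty β] {t : ℕ} {a : ℕ → ℕ}
    (F : Finset (Fin t) → Finset β) (hF : Pairwise (Disjoint on F))
    (hcard : ∀ Y : Finset (Fin t), #Y ∈ Icc 1 (t - 1) → a #Y ≤ #(F Y)) :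
    ∃ ρ : ℕ × ℕ × Finset (Fin t) → β,
      Set.InjOn ρ (stackedRows t a) ∧ ∀ r ∈ stackedRows t a, ρ r ∈ F r.2.2 := by
  choose e he using fun Y => (range #(F Y)).finite_toSet.exists_bijOn_of_encard_eq
    (t := (F Y : Set β))
    (by rw [Set.encard_coe_eq_coe_finsetCard, Set.encard_coe_eq_coe_finsetCard, card_range])
  have hidx : ∀ r ∈ stackedRows t a, r.2.1 - 1 ∈ (range #(F r.2.2) : Set ℕ) := fun r hr => by
    obtain ⟨hs, hi, hY⟩ := mem_stackedRows.1 hr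
    have := hcard r.2.2 (hY ▸ hs)
    rw [mem_Icc, ← hY] at hi
    simp only [coe_range, Set.mem_Iio]
    omega
  have hmem : ∀ r ∈ stackedRows t a, e r.2.2 (r.2.1 - 1) ∈ F r.2.2 := fun r hr =>
    (he r.2.2).mapsTo (hidx r hr)
  refine ⟨fun r => e r.2.2 (r.2.1 - 1), fun r hr r' hr' h => ?_, hmem⟩
  dsimp only at h
  have hY : r.2.2 = r'.2.2 := by
    by_contra hne
    exact disjoint_left.1 (hF hne) (hmem r hr) (h ▸ hmem r' hr')
  have hi := (he r'.2.2).injOn (hY ▸ hidx r hr) (hidx r' hr') (hY ▸ h)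
  obtain ⟨-, hi₁, hs⟩ := mem_stackedRows.1 hr
  obtain ⟨-, hi₁', hs'⟩ := mem_stackedRows.1 hr'
  rw [mem_Icc] at hi₁ hi₁'
  exact Prod.ext (hs.symm.trans (hY ▸ hs')) (Prod.ext (by omega) hY)

theorem hppda_from_t_design_general
    (v k t lam : ℕ) (hkt : t ≤ k) (hvk : k < v)
    (A : Finset (Finset (Fin v)))
    (hblocks : ∀ b ∈ A, b.card = k)
    (hdes : ∀ T : Finset (Fin v), T.card = t →
      (A.filter (fun b => T ⊆ b)).card = lam)
    (a : ℕ → ℕ)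
    (ha : ∀ s ∈ Finset.Icc 1 (t - 1),
      ((a s : ℚ)) ≤ lam * ((v - t).choose (k - s)) / ((v - t).choose (k - t))) :
    ∀ τ : Finset (Fin v), τ.card = t →
      ∀ f : Fin v → Fin t, Set.InjOn f ↑τ →
        ∃ ρ : ℕ × ℕ × Finset (Fin t) → Finset (Fin v),
          Set.InjOn ρ ↑(stackedRows t a) ∧
          (∀ r ∈ stackedRows t a, ρ r ∈ A) ∧
          (∀ r ∈ stackedRows t a, ∀ x ∈ τ, (x ∈ ρ r ↔ f x ∈ r.2.2)) := by
  intro τ hτ f hf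
  have hτ' : #τ = Fintype.card (Fin t) := by rw [hτ, Fintype.card_fin]
  obtain ⟨ρ, hinj, hρ⟩ := exists_injOn_stackedRows (a := a)
    (fun Y => {b ∈ A | b ∩ τ = {x ∈ τ | f x ∈ Y}})
    (fun Y Y' hne => disjoint_filter.2 fun _ _ h h' =>
      hne (filter_apply_mem_injective hf hτ' (h.symm.trans h')))
    (fun Y hY => le_card_filter_inter_eq hblocks hdes hkt (by simpa using hvk.le) hτ
      (filter_subset _ τ) (by simpa [card_filter_apply_mem hf hτ'] using ha #Y hY))
  refine ⟨ρ, hinj, fun r hr => (mem_filter.1 (hρ r hr)).1, fun r hr x hx => ?_⟩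
  have htrace := congr_arg (x ∈ ·) (mem_filter.1 (hρ r hr)).2
  simp only [mem_inter, mem_filter, hx, and_true, true_and, eq_iff_iff] at htrace
  exact htrace

/-- For a t-(v,k,λ) design with no repeated blocks and
a_s ∈ {0,…,λ_s^t} with Σ_s a_s·C(t,s) > λ_1, for every t-subset τ of the
point set (with any bijection f from τ to [t]) one can injectively pick, for
each row (s,i,Y) of the stacked PDA B, a block of the design whose trace on τ
is exactly f⁻¹(Y); i.e., the subarray of the incidence array P on these rows
and the columns τ has its stars exactly where B does. -/
theorem hppda_from_t_design
    (v k t lam : ℕ) (ht : 1 ≤ t) (hkt : t ≤ k) (hvk : k < v)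
    (A : Finset (Finset (Fin v)))
    (hblocks : ∀ b ∈ A, b.card = k)
    (hdes : ∀ T : Finset (Fin v), T.card = t →
      (A.filter (fun b => T ⊆ b)).card = lam)
    (a : ℕ → ℕ)
    (ha : ∀ s ∈ Finset.Icc 1 (t - 1),
      ((a s : ℚ)) ≤ lam * ((v - t).choose (k - s)) / ((v - t).choose (k - t)))
    (hbig : ((∑ s ∈ Finset.Icc 1 (t - 1), a s * t.choose s : ℕ) : ℚ)
      > lam * ((v - 1).choose (t - 1)) / ((k - 1).choose (t - 1))) :
    ∀ τ : Finset (Fin v), τ.card = t →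
      ∀ f : Fin v → Fin t, Set.InjOn f ↑τ →
        ∃ ρ : ℕ × ℕ × Finset (Fin t) → Finset (Fin v),
          Set.InjOn ρ ↑(stackedRows t a) ∧
          (∀ r ∈ stackedRows t a, ρ r ∈ A) ∧
          (∀ r ∈ stackedRows t a, ∀ x ∈ τ, (x ∈ ρ r ↔ f x ∈ r.2.2)) :=
  hppda_from_t_design_general v k t lam hkt hvk A hblocks hdes a ha
end

section
/- In the MAN PDA B for K' users with parameter t, one can remove floor(K'/(t+1))·(Z−Z') integer entries (i.e., choose a set T of symbols with |T| = floor(K'/(t+1))·(Z−Z')) such that each column of B contains at most Z−Z' symbols from T, whenever Z−Z' ≤ C(K'−1,t), where Z' = C(K'−1,t−1). -/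
/-!
Write `n = Z - Z'`. There are enough symbols to pick `⌊K'/(t+1)⌋·n` of them, since
`⌊K'/(t+1)⌋·n·(t+1) ≤ K'·C(K'-1,t) = C(K',t+1)·(t+1)`, and any such choice has total column load
`⌊K'/(t+1)⌋·n·(t+1) ≤ K'·n`. So if a column `a` carries more than `n` chosen symbols, another
column `b` carries fewer than `n`; replacing a chosen symbol `U ∋ a`, `U ∌ b` by `(U - a) + b`
(which is possible for some such `U`, as `b` has the smaller load) lowers the load of `a` without
pushing `b` above `n`. A choice minimising the total overflow `∑ₐ (load a - n)` is thus balanced.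
-/

open Finset

namespace SetFamily

variable {α : Type*} [DecidableEq α]

def degree (𝒜 : Finset (Finset α)) (a : α) : ℕ := #{s ∈ 𝒜 | a ∈ s}

/-- Truncated subtraction: only the load above `n` counts. -/
def excess [Fintype α] (𝒜 : Finset (Finset α)) (n : ℕ) : ℕ := ∑ a, (degree 𝒜 a - n)

theorem sum_degree_of_sized [Fintype α] {𝒜 : Finset (Finset α)} {k : ℕ}
    (h𝒜 : (𝒜 : Set (Finset α)).Sized k) : ∑ a, degree 𝒜 a = #𝒜 * k := by
  have := sum_card_bipartiteAbove_eq_sum_card_bipartiteBelow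
    (s := (univ : Finset α)) (t := 𝒜) (r := fun a s => a ∈ s)
  simp only [bipartiteAbove, bipartiteBelow, filter_mem_eq_inter, univ_inter] at this
  simp only [degree]
  rw [this, sum_congr rfl fun s hs => h𝒜 hs, sum_const, smul_eq_mul]

theorem degree_eq_card_add_card (𝒜 : Finset (Finset α)) (a b : α) :
    degree 𝒜 a = #{s ∈ 𝒜 | a ∈ s ∧ b ∈ s} + #{s ∈ 𝒜 | a ∈ s ∧ b ∉ s} := by
  rw [degree, ← card_filter_add_card_filter_not (s := {s ∈ 𝒜 | a ∈ s}) (b ∈ ·)]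
  simp only [filter_filter]

theorem degree_insert_erase_add {𝒜 : Finset (Finset α)} {s t : Finset α} (hs : s ∈ 𝒜)
    (ht : t ∉ 𝒜) (a : α) :
    degree (insert t (𝒜.erase s)) a + (if a ∈ s then 1 else 0) =
      degree 𝒜 a + (if a ∈ t then 1 else 0) := by
  have ht' : t ∉ 𝒜.erase s := fun h => ht (mem_of_mem_erase h)
  simp only [degree, card_filter, sum_insert ht', ← add_sum_erase 𝒜 _ hs]
  ring

/-- Otherwise the swap `a ↔ b` would inject the members containing `a` but not `b` into those
containing `b` but not `a`. -/
theorem exists_map_swap_notMem {𝒜 : Finset (Finset α)} {a b : α}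
    (hab : degree 𝒜 b < degree 𝒜 a) :
    ∃ s ∈ 𝒜, a ∈ s ∧ b ∉ s ∧ s.map (Equiv.swap a b).toEmbedding ∉ 𝒜 := by
  by_contra! hswap
  let A : Finset (Finset α) := {s ∈ 𝒜 | a ∈ s ∧ b ∉ s}
  let B : Finset (Finset α) := {s ∈ 𝒜 | b ∈ s ∧ a ∉ s}
  have hmaps : Set.MapsTo (fun s : Finset α => s.map (Equiv.swap a b).toEmbedding) A B := by
    intro s hs
    simp only [A, B, coe_filter, Set.mem_ofPred_eq] at hs ⊢
    simp [mem_map_equiv, hswap s hs.1 hs.2.1 hs.2.2, hs.2.1, hs.2.2]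
  have hle : #A ≤ #B := card_le_card_of_injOn _ hmaps fun _ _ _ _ h => map_injective _ h
  have hcommon : #{s ∈ 𝒜 | b ∈ s ∧ a ∈ s} = #{s ∈ 𝒜 | a ∈ s ∧ b ∈ s} := by
    simp only [and_comm]
  rw [degree_eq_card_add_card 𝒜 a b, degree_eq_card_add_card 𝒜 b a, hcommon] at hab
  simp only [A, B] at hle
  omega

variable [Fintype α]

theorem exists_degree_lt {𝒜 : Finset (Finset α)} {n : ℕ}
    (hsum : ∑ a, degree 𝒜 a ≤ Fintype.card α * n) {a : α} (ha : n < degree 𝒜 a) :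
    ∃ b, degree 𝒜 b < n := by
  by_contra! hb
  have := sum_lt_sum (fun b _ => hb b) ⟨a, mem_univ a, ha⟩
  simp only [sum_const, card_univ, smul_eq_mul] at this
  omega

theorem exists_sized_card_eq_excess_lt {𝒜 : Finset (Finset α)} {k n : ℕ}
    (h𝒜 : (𝒜 : Set (Finset α)).Sized k) {a b : α} (ha : n < degree 𝒜 a)
    (hb : degree 𝒜 b < n) :
    ∃ ℬ : Finset (Finset α), (ℬ : Set (Finset α)).Sized k ∧ #ℬ = #𝒜 ∧
      excess ℬ n < excess 𝒜 n := by
  obtain ⟨s, hs, has, hbs, hnew⟩ := exists_map_swap_notMem (hb.trans ha)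
  set t := s.map (Equiv.swap a b).toEmbedding
  set ℬ := insert t (𝒜.erase s)
  have hdeg := degree_insert_erase_add hs hnew
  have hdega : degree ℬ a + 1 = degree 𝒜 a := by simpa [t, mem_map_equiv, has, hbs] using hdeg a
  have hdegb : degree ℬ b = degree 𝒜 b + 1 := by simpa [t, mem_map_equiv, has, hbs] using hdeg b
  have hdegc (c : α) (hca : c ≠ a) (hcb : c ≠ b) : degree ℬ c = degree 𝒜 c := by
    simpa [t, mem_map_equiv, Equiv.swap_apply_of_ne_of_ne hca hcb] using hdeg c
  refine ⟨ℬ, ?_, ?_, ?_⟩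
  · intro u hu
    obtain rfl | hu := mem_insert.1 (mem_coe.1 hu)
    · rw [card_map, h𝒜 hs]
    · exact h𝒜 (mem_of_mem_erase hu)
  · rw [card_insert_of_notMem fun h => hnew (mem_of_mem_erase h), card_erase_of_mem hs,
      Nat.sub_add_cancel (card_pos.2 ⟨s, hs⟩)]
  · refine sum_lt_sum (fun c _ => ?_) ⟨a, mem_univ a, by omega⟩
    by_cases hca : c = a
    · subst hca; omega
    by_cases hcb : c = b
    · subst hcb; omega
    rw [hdegc c hca hcb]

theorem exists_sized_card_eq_degree_le {k N n : ℕ} (hN : N ≤ (Fintype.card α).choose k)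
    (hload : N * k ≤ Fintype.card α * n) :
    ∃ 𝒜 : Finset (Finset α), (𝒜 : Set (Finset α)).Sized k ∧ #𝒜 = N ∧ ∀ a, degree 𝒜 a ≤ n := by
  obtain ⟨𝒜, h𝒜, hmin⟩ := exists_min_image (powersetCard N (powersetCard k univ))
    (fun ℬ : Finset (Finset α) => excess ℬ n)
    (powersetCard_nonempty.2 (by rwa [card_powersetCard, card_univ]))
  rw [mem_powersetCard, subset_powersetCard_univ_iff] at h𝒜
  obtain ⟨hsized, hcard⟩ := h𝒜
  refine ⟨𝒜, hsized, hcard, fun a => not_lt.1 fun ha => ?_⟩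
  obtain ⟨b, hb⟩ := exists_degree_lt (by rwa [sum_degree_of_sized hsized, hcard]) ha
  obtain ⟨ℬ, hℬ, hcardℬ, hlt⟩ := exists_sized_card_eq_excess_lt hsized ha hb
  have := hmin ℬ <| by
    rw [mem_powersetCard, subset_powersetCard_univ_iff]
    exact ⟨hℬ, hcardℬ.trans hcard⟩
  omega

end SetFamily

theorem Nat.mul_choose_sub_one (K t : ℕ) : K * (K - 1).choose t = K.choose (t + 1) * (t + 1) := by
  cases K with
  | zero => simp
  | succ K => exact Nat.add_one_mul_choose_eq K t

theorem man_pda_symbol_removal_general (K' t Z Z' : ℕ)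
    (hbound : Z - Z' ≤ (K' - 1).choose t) :
    ∃ T : Finset (Finset (Fin K')),
      (∀ U ∈ T, U.card = t + 1) ∧
      (∀ j : Fin K', (T.filter (fun U => j ∈ U)).card ≤ Z - Z') ∧
      T.card = (K' / (t + 1)) * (Z - Z') := by
  have hload : K' / (t + 1) * (Z - Z') * (t + 1) ≤ K' * (Z - Z') := by
    rw [mul_right_comm]
    exact Nat.mul_le_mul_right _ (Nat.div_mul_le_self K' (t + 1))
  have hsymbols : K' / (t + 1) * (Z - Z') ≤ K'.choose (t + 1) := by
    refine Nat.le_of_mul_le_mul_right ?_ t.succ_pos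
    rw [← Nat.mul_choose_sub_one]
    exact hload.trans (Nat.mul_le_mul_left K' hbound)
  obtain ⟨T, hT, hcard, hdeg⟩ := SetFamily.exists_sized_card_eq_degree_le (α := Fin K') (k := t + 1)
    (N := K' / (t + 1) * (Z - Z')) (n := Z - Z')
    (by rwa [Fintype.card_fin]) (by rwa [Fintype.card_fin])
  exact ⟨T, hT, hdeg, hcard⟩

/-- In the MAN PDA for K' users with parameter t (symbols are
the (t+1)-subsets of [K'], symbol U appearing precisely in columns j ∈ U),
whenever Z ≥ Z' = C(K'−1,t−1) and Z−Z' ≤ C(K'−1,t), one can choose a set T of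
symbols with |T| = ⌊K'/(t+1)⌋·(Z−Z') such that each column contains at most
Z−Z' symbols of T. -/
theorem man_pda_symbol_removal (K' t Z Z' : ℕ) (ht : 1 ≤ t) (htK : t < K')
    (hZ' : Z' = (K' - 1).choose (t - 1)) (hZZ' : Z' ≤ Z)
    (hbound : Z - Z' ≤ (K' - 1).choose t) :
    ∃ T : Finset (Finset (Fin K')),
      (∀ U ∈ T, U.card = t + 1) ∧
      (∀ j : Fin K', (T.filter (fun U => j ∈ U)).card ≤ Z - Z') ∧
      T.card = (K' / (t + 1)) * (Z - Z') :=
  man_pda_symbol_removal_general K' t Z Z' hbound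
end
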